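/- For every integer m ≥ 0, the number of odd Grassmannian involutions of {1,…,m} equals ⌊(m+1)²/8⌋. -/

import Mathlib

/-- A permutation of `{1,…,n}` (modeled as `Fin n`) is Grassmannian if it has
at most one descent, where a descent is a position `i` with `σ(i) > σ(i+1)`. -/
def IsGrassmannian {n : ℕ} (σ : Equiv.Perm (Fin n)) : Prop :=
  {i : ℕ | ∃ h : i + 1 < n, σ ⟨i + 1, h⟩ < σ ⟨i, Nat.lt_of_succ_lt h⟩}.Subsingleton

open Fin.NatCast

lemma finRotate_pow_apply (n j : ℕ) (i : Fin (n+1)) :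
    ((finRotate (n+1))^j) i = i + (j : Fin (n+1)) := by
  induction j with
  | zero => simp
  | succ j ih =>
    rw [pow_succ', Equiv.Perm.mul_apply, finRotate_succ_apply, Nat.cast_succ]
    rw [ih]; exact add_assoc _ _ _

lemma finRotate_pow_apply' {n : ℕ} [NeZero n] (j : ℕ) (i : Fin n) :
    ((finRotate n)^j) i = i + (j : Fin n) := by
  cases n with
  | zero => exact (NeZero.ne 0 rfl).elim
  | succ n => exact finRotate_pow_apply n j i

section BS
variable (m a k : ℕ)

def bsP : Fin m → Prop := fun x => a ≤ (x : ℕ) ∧ (x : ℕ) < a + 2*k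

instance : DecidablePred (bsP m a k) := fun _ => instDecidableAnd

def bsE (h : a + 2*k ≤ m) : Fin (2*k) ≃ Subtype (bsP m a k) where
  toFun i := ⟨⟨a + i, by have := i.isLt; omega⟩, by have := i.isLt; constructor <;> simp <;> omega⟩
  invFun x := ⟨(x : Fin m) - a, by have := x.2.1; have := x.2.2; simp [bsP] at *; omega⟩
  left_inv i := by ext; simp
  right_inv x := by
    have h1 := x.2.1; have h2 := x.2.2
    ext; simp; omega

noncomputable def blockSwap : Equiv.Perm (Fin m) :=
  if h : a + 2*k ≤ m then ((finRotate (2*k))^k).extendDomain (bsE m a k h) else 1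
end BS

section BS2
variable {m a k : ℕ} (h : a + 2*k ≤ m)

lemma blockSwap_apply_in (i : ℕ) (hi : i < 2*k) :
    ((blockSwap m a k ⟨a + i, by omega⟩ : Fin m) : ℕ) = a + (i + k) % (2*k) := by
  have hk : k ≠ 0 := by omega
  obtain ⟨n, hn⟩ : ∃ n, 2*k = n + 1 := ⟨2*k - 1, by omega⟩
  rw [blockSwap, dif_pos h]
  have hb : (⟨a + i, by omega⟩ : Fin m) = ((bsE m a k h ⟨i, hi⟩ : Subtype (bsP m a k)) : Fin m) := by
    ext; simp [bsE]
  rw [hb, Equiv.Perm.extendDomain_apply_image]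
  haveI : NeZero (2*k) := ⟨by omega⟩
  rw [finRotate_pow_apply']
  simp [bsE, Fin.add_def, Fin.val_natCast, Nat.mod_eq_of_lt (show k < 2*k by omega)]

end BS2

section BS3
variable {m a k : ℕ}

lemma blockSwap_apply_out (x : Fin m) (hx : (x:ℕ) < a ∨ a + 2*k ≤ (x:ℕ)) :
    blockSwap m a k x = x := by
  rw [blockSwap]
  split
  · exact Equiv.Perm.extendDomain_apply_not_subtype _ _ (by simp [bsP]; omega)
  · rfl

lemma blockSwap_val (h : a + 2*k ≤ m) (x : Fin m) :
    ((blockSwap m a k x : Fin m) : ℕ) =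
      if (x:ℕ) < a then (x:ℕ) else if (x:ℕ) < a+k then (x:ℕ) + k
      else if (x:ℕ) < a+2*k then (x:ℕ) - k else (x:ℕ) := by
  by_cases hx : (x:ℕ) < a ∨ a + 2*k ≤ (x:ℕ)
  · rw [blockSwap_apply_out x hx]
    rcases hx with hx | hx
    · rw [if_pos hx]
    · rw [if_neg (by omega), if_neg (by omega), if_neg (by omega)]
  · push_neg at hx
    obtain ⟨hx1, hx2⟩ := hx
    have hxe : x = (⟨a + ((x:ℕ) - a), by omega⟩ : Fin m) := by ext; simp; omega
    conv_lhs => rw [hxe]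
    rw [blockSwap_apply_in h ((x:ℕ) - a) (by omega)]
    by_cases hlt : (x:ℕ) - a < k
    · rw [Nat.mod_eq_of_lt (by omega)]
      split_ifs <;> omega
    · rw [Nat.mod_eq_sub_mod (by omega), Nat.mod_eq_of_lt (by omega)]
      split_ifs <;> omega

lemma blockSwap_sq : blockSwap m a k * blockSwap m a k = 1 := by
  rw [blockSwap]
  split
  · rw [Equiv.Perm.extendDomain_mul, ← pow_add]
    have hk : k = 0 ∨ k ≠ 0 := by omega
    rcases hk with hk | hk
    · subst hk; norm_num
    haveI : NeZero (2*k) := ⟨by omega⟩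
    have : (finRotate (2*k))^(k+k) = 1 := by
      ext i
      rw [finRotate_pow_apply']
      simp [show ((k+k : ℕ) : Fin (2*k)) = 0 by
        rw [show k + k = 2*k by ring]; exact Fin.natCast_self _]
    rw [this, Equiv.Perm.extendDomain_one]
  · norm_num

lemma blockSwap_sign (h : a + 2*k ≤ m) :
    Equiv.Perm.sign (blockSwap m a k) = (-1)^k := by
  rw [blockSwap, dif_pos h, Equiv.Perm.sign_extendDomain, map_pow]
  cases k with
  | zero => norm_num
  | succ k' =>
    rw [show 2*(k'+1) = (2*k'+1)+1 from by ring, sign_finRotate, Nat.add_sub_cancel, ← pow_mul]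
    rcases Nat.even_or_odd (k'+1) with he | ho
    · rw [he.neg_one_pow, (by rcases he with ⟨t,ht⟩; exact ⟨(2*k'+1)*t, by rw [ht]; ring⟩ :
        Even ((2*k'+1)*(k'+1))).neg_one_pow]
    · rw [ho.neg_one_pow, (Odd.mul (by exact ⟨k', by ring⟩) ho).neg_one_pow]

end BS3

section BS4
variable {m a k : ℕ}

lemma blockSwap_descent (h : a + 2*k ≤ m) (i : ℕ) (hi : i + 1 < m)
    (hd : blockSwap m a k ⟨i+1, hi⟩ < blockSwap m a k ⟨i, Nat.lt_of_succ_lt hi⟩) :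
    i + 1 = a + k := by
  have h1 := blockSwap_val h ⟨i, Nat.lt_of_succ_lt hi⟩
  have h2 := blockSwap_val h ⟨i+1, hi⟩
  rw [Fin.lt_def] at hd
  simp only [] at h1 h2
  split_ifs at h1 h2 <;> omega

lemma blockSwap_grassmannian (h : a + 2*k ≤ m) : IsGrassmannian (blockSwap m a k) := by
  intro i hi j hj
  obtain ⟨hi1, hi2⟩ := hi
  obtain ⟨hj1, hj2⟩ := hj
  have := blockSwap_descent h i hi1 hi2
  have := blockSwap_descent h j hj1 hj2
  omega

end BS4

lemma characterize {m : ℕ} {σ : Equiv.Perm (Fin m)} (hG : IsGrassmannian σ)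
    (hI : σ * σ = 1) (hS : Equiv.Perm.sign σ = -1) :
    ∃ a k, k % 2 = 1 ∧ a + 2*k ≤ m ∧ σ = blockSwap m a k := by
  classical
  set f : ℕ → ℕ := fun i => if hi : i < m then ((σ ⟨i, hi⟩ : Fin m) : ℕ) else 0 with hf
  have hfb : ∀ i, i < m → f i < m := by
    intro i hi; simp only [hf, dif_pos hi]; exact (σ ⟨i, hi⟩).isLt
  have finv : ∀ i, i < m → f (f i) = i := by
    intro i hi
    simp only [hf, dif_pos hi, dif_pos ((σ ⟨i, hi⟩).isLt)]
    have := Equiv.Perm.ext_iff.mp hI ⟨i, hi⟩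
    simp only [Equiv.Perm.mul_apply, Equiv.Perm.one_apply] at this
    conv_lhs => rw [show (⟨(σ ⟨i, hi⟩ : Fin m), (σ ⟨i, hi⟩).isLt⟩ : Fin m) = σ ⟨i, hi⟩ from
      Fin.ext rfl]
    rw [this]
  have hdes : ∀ t, (ht : t + 1 < m) →
      (σ ⟨t+1, ht⟩ < σ ⟨t, Nat.lt_of_succ_lt ht⟩ ↔ f (t+1) < f t) := by
    intro t ht
    simp only [hf, dif_pos ht, dif_pos (Nat.lt_of_succ_lt ht), Fin.lt_def]
  -- there is a descent
  have hex : ∃ d, ∃ (hd : d + 1 < m), f (d+1) < f d := by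
    by_contra hno
    push_neg at hno
    have hmono : ∀ t, t + 1 < m → f t < f (t+1) := by
      intro t ht
      have h1 := hno t ht
      have h2 : f (t+1) ≠ f t := by
        intro he
        have h3 := finv (t+1) ht
        rw [he] at h3
        have h4 := finv t (Nat.lt_of_succ_lt ht)
        omega
      omega
    have hge : ∀ i, i < m → i ≤ f i := by
      intro i
      induction i with
      | zero => omega
      | succ i ih =>
        intro hi
        have := ih (by omega)
        have := hmono i hi
        omega
    have hfix : ∀ i, i < m → f i = i := by
      intro i hi
      have h1 := hge i hi
      have h2 := hge (f i) (hfb i hi)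
      have h3 := finv i hi
      omega
    have hone : σ = 1 := by
      ext x
      have := hfix x x.isLt
      simp only [hf, dif_pos x.isLt] at this
      simpa using this
    rw [hone] at hS
    simp at hS
  obtain ⟨d, hdm, hdlt⟩ := hex
  have huniq : ∀ t, (t + 1 < m) → f (t+1) < f t → t = d := by
    intro t ht hlt
    exact hG ⟨ht, (hdes t ht).mpr hlt⟩ ⟨hdm, (hdes d hdm).mpr hdlt⟩
  -- monotone runs
  have M : ∀ j i, i ≤ j → j < m → (∀ t, i ≤ t → t < j → t ≠ d) → f i + (j - i) ≤ f j := by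
    intro j
    induction j with
    | zero => intro i hij _ _; interval_cases i; omega
    | succ j ih =>
      intro i hij hj hno
      rcases Nat.eq_or_lt_of_le hij with rfl | hlt
      · omega
      · have h1 : f i + (j - i) ≤ f j :=
          ih i (by omega) (by omega) (fun t ht1 ht2 => hno t ht1 (by omega))
        have hne : f (j+1) ≠ f j := by
          intro he
          have h3 := finv (j+1) hj
          rw [he] at h3
          have h4 := finv j (by omega)
          omega
        have h2 : ¬ f (j+1) < f j := by
          intro hlt'
          exact hno j (by omega) (by omega) (huniq j hj hlt')
        omega
  have L1 : ∀ i, i ≤ d → i ≤ f i := by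
    intro i hi
    have := M i 0 (by omega) (by omega) (fun t ht1 ht2 => by omega)
    omega
  have L2 : ∀ i, d + 1 ≤ i → i < m → f i ≤ i := by
    intro i hi1 hi2
    have := M (m-1) i (by omega) (by omega) (fun t ht1 ht2 => by omega)
    have := hfb (m-1) (by omega)
    omega
  have hfd : d < f d := by
    by_contra hle
    have h1 := L1 d (le_refl d)
    have h2 : f d = d := by omega
    have h3 : f (d+1) < d := by omega
    have h4 := finv (d+1) hdm
    have h5 := M d (f (d+1)) (by omega) (by omega) (fun t ht1 ht2 => by omega)
    omega
  have hfd1 : f (d+1) ≤ d := by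
    by_contra hgt
    have h1 := L2 (d+1) (le_refl _) hdm
    have h2 : f (d+1) = d + 1 := by omega
    have h3 : d + 1 < f d := by omega
    have h4 := finv d (by omega)
    have h5 := hfb d (by omega)
    have h6 := M (f d) (d+1) (by omega) h5 (fun t ht1 ht2 => by omega)
    omega
  set a := f (d+1) with ha
  have hfa : f a = d + 1 := finv (d+1) hdm
  have hak : a ≤ d := hfd1
  -- upper fixed points
  have hup : ∀ j, f d < j → j < m → f j = j := by
    intro j h1 h2
    have h3 : d < j := by omega
    have h4 := L2 j (by omega) h2
    by_contra hne
    have h5 : f j < j := by omega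
    have h6 := finv j h2
    have h7 : f j ≤ d := by
      by_contra hgt
      have := L2 (f j) (by omega) (hfb j h2)
      omega
    have h8 := M d (f j) (by omega) (by omega) (fun t ht1 ht2 => by omega)
    omega
  -- lower fixed points
  have hlow : ∀ i, i < a → f i = i := by
    intro i h1
    have h2 := L1 i (by omega)
    by_contra hne
    have h3 : i < f i := by omega
    have h4 := finv i (by omega)
    have h5 : d + 1 ≤ f i := by
      by_contra hgt
      have := L1 (f i) (by omega)
      omega
    have h6 := M (f i) (d+1) (by omega) (hfb i (by omega)) (fun t ht1 ht2 => by omega)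
    omega
  -- size of block
  have hsize : f d = 2*d + 1 - a := by
    have h1 := M d a hak (by omega) (fun t ht1 ht2 => by omega)
    have h2 := hfb d (by omega)
    have h3 := finv d (by omega)
    have h4 := M (f d) (d+1) (by omega) h2 (fun t ht1 ht2 => by omega)
    omega
  -- middle mapping
  have hmid : ∀ t, t ≤ d - a → f (a + t) = d + 1 + t := by
    intro t ht
    have h1 := M (a+t) a (by omega) (by omega) (fun s hs1 hs2 => by omega)
    have h2 := M d (a+t) (by omega) (by omega) (fun s hs1 hs2 => by omega)
    omega
  have hmid2 : ∀ t, t ≤ d - a → f (d + 1 + t) = a + t := by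
    intro t ht
    have h1 := hmid t ht
    have h2 := finv (a+t) (by omega)
    rw [h1] at h2
    omega
  have hfdm := hfb d (by omega)
  have hbs : σ = blockSwap m a (d + 1 - a) := by
    ext x
    have hval := blockSwap_val (show a + 2*(d+1-a) ≤ m by omega) x
    have hx : ((σ x : Fin m) : ℕ) = f x := by simp [hf, dif_pos x.isLt]
    rw [hval, hx]
    split_ifs with c1 c2 c3
    · exact hlow x c1
    · have h1 := hmid ((x:ℕ) - a) (by omega)
      rw [show a + ((x:ℕ) - a) = (x:ℕ) by omega] at h1
      omega
    · have h1 := hmid2 ((x:ℕ) - (d+1)) (by omega)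
      rw [show d + 1 + ((x:ℕ) - (d+1)) = (x:ℕ) by omega] at h1
      omega
    · exact hup x (by omega) x.isLt
  refine ⟨a, d + 1 - a, ?_, by omega, hbs⟩
  rw [hbs, blockSwap_sign (by omega)] at hS
  rcases Nat.even_or_odd (d + 1 - a) with he | ho
  · rw [he.neg_one_pow] at hS
    exact absurd hS (by decide)
  · exact Nat.odd_iff.mp ho

lemma blockSwap_inj {m a k a' k' : ℕ} (h : a + 2*k ≤ m) (h' : a' + 2*k' ≤ m)
    (hk : 1 ≤ k) (hk' : 1 ≤ k') (he : blockSwap m a k = blockSwap m a' k') :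
    a = a' ∧ k = k' := by
  have key : ∀ x : Fin m,
      (if (x:ℕ) < a then (x:ℕ) else if (x:ℕ) < a+k then (x:ℕ)+k
        else if (x:ℕ) < a+2*k then (x:ℕ)-k else (x:ℕ)) =
      (if (x:ℕ) < a' then (x:ℕ) else if (x:ℕ) < a'+k' then (x:ℕ)+k'
        else if (x:ℕ) < a'+2*k' then (x:ℕ)-k' else (x:ℕ)) := by
    intro x
    rw [← blockSwap_val h x, ← blockSwap_val h' x, he]
  have ha : a = a' := by
    by_contra hne
    rcases Nat.lt_or_ge a a' with hlt | hge
    · have := key ⟨a, by omega⟩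
      simp only [Fin.val_mk] at this
      split_ifs at this <;> omega
    · have := key ⟨a', by omega⟩
      simp only [Fin.val_mk] at this
      split_ifs at this <;> omega
  subst ha
  refine ⟨rfl, ?_⟩
  have := key ⟨a, by omega⟩
  simp only [Fin.val_mk] at this
  split_ifs at this <;> omega

def bsParams (m : ℕ) : Finset (ℕ × ℕ) :=
  (Finset.range (m+1) ×ˢ Finset.range (m+1)).filter
    (fun p => p.2 % 2 = 1 ∧ p.1 + 2*p.2 ≤ m)

lemma card_odd_range (n : ℕ) :
    ((Finset.range n).filter (fun k => k % 2 = 1)).card = n / 2 := by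
  induction n with
  | zero => rfl
  | succ n ih =>
    rw [Finset.range_add_one, Finset.filter_insert]
    split_ifs with h
    · rw [Finset.card_insert_of_notMem (by simp)]
      omega
    · omega

lemma keyid (s : ℕ) : ((s+1)^2)/8 = s^2/8 + (s+2)/4 := by
  have h1 : s ^ 2 % 8 = (s % 8)^2 % 8 := Nat.pow_mod s 2 8
  rw [show (s+1)^2 = s^2+2*s+1 by ring]
  have h6 : s % 8 = 0 ∨ s % 8 = 1 ∨ s % 8 = 2 ∨ s % 8 = 3 ∨ s % 8 = 4 ∨ s % 8 = 5 ∨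
      s % 8 = 6 ∨ s % 8 = 7 := by omega
  rcases h6 with h|h|h|h|h|h|h|h <;> rw [h] at h1 <;> norm_num at h1 <;> omega

lemma card_bsParams (m : ℕ) : (bsParams m).card = (m+1)^2/8 := by
  induction m with
  | zero => rfl
  | succ m ih =>
    have hsplit : bsParams (m+1) = bsParams m ∪
        ((Finset.range (m+2) ×ˢ Finset.range (m+2)).filter
          (fun p => p.2 % 2 = 1 ∧ p.1 + 2*p.2 = m+1)) := by
      ext ⟨a, k⟩
      simp only [bsParams, Finset.mem_union, Finset.mem_filter, Finset.mem_product,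
        Finset.mem_range]
      omega
    have hdisj : Disjoint (bsParams m)
        ((Finset.range (m+2) ×ˢ Finset.range (m+2)).filter
          (fun p => p.2 % 2 = 1 ∧ p.1 + 2*p.2 = m+1)) := by
      rw [Finset.disjoint_left]
      rintro ⟨a, k⟩ h1 h2
      simp only [bsParams, Finset.mem_filter, Finset.mem_product, Finset.mem_range] at h1 h2
      omega
    have hN : ((Finset.range (m+2) ×ˢ Finset.range (m+2)).filter
        (fun p => p.2 % 2 = 1 ∧ p.1 + 2*p.2 = m+1)) =
        ((Finset.range (m+2)).filter (fun k => k % 2 = 1 ∧ 2*k ≤ m+1)).image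
          (fun k => (m+1-2*k, k)) := by
      ext ⟨a, k⟩
      simp only [Finset.mem_filter, Finset.mem_product, Finset.mem_range, Finset.mem_image]
      constructor
      · rintro ⟨⟨ha, hk⟩, h1, h2⟩
        exact ⟨k, ⟨hk, h1, by omega⟩, by simp; omega⟩
      · rintro ⟨k', ⟨hk', h1, h2⟩, h3⟩
        simp only [Prod.mk.injEq] at h3
        obtain ⟨h4, h5⟩ := h3
        subst h5; omega
    have hNcard : ((Finset.range (m+2)).filter (fun k => k % 2 = 1 ∧ 2*k ≤ m+1)).card
        = (m+3)/4 := by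
      have : ((Finset.range (m+2)).filter (fun k => k % 2 = 1 ∧ 2*k ≤ m+1)) =
          ((Finset.range ((m+3)/2)).filter (fun k => k % 2 = 1)) := by
        ext k
        simp only [Finset.mem_filter, Finset.mem_range]
        omega
      rw [this, card_odd_range]
      omega
    rw [hsplit, Finset.card_union_of_disjoint hdisj, ih, hN,
      Finset.card_image_of_injective _ (fun x y hxy => (Prod.ext_iff.mp hxy).2),
      hNcard]
    exact (keyid (m+1)).symm

/-- For every `m ≥ 0`, the number of odd Grassmannian involutions of
`{1,…,m}` equals `⌊(m+1)²/8⌋`. -/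
theorem count_odd_grassmannian_involutions (m : ℕ) :
    {σ : Equiv.Perm (Fin m) |
        IsGrassmannian σ ∧ σ * σ = 1 ∧ Equiv.Perm.sign σ = -1}.ncard =
      (m + 1) ^ 2 / 8 := by
  classical
  have hset : {σ : Equiv.Perm (Fin m) |
      IsGrassmannian σ ∧ σ * σ = 1 ∧ Equiv.Perm.sign σ = -1} =
      (fun p : ℕ × ℕ => blockSwap m p.1 p.2) '' (bsParams m : Set (ℕ × ℕ)) := by
    ext σ
    simp only [Set.mem_setOf_eq, Set.mem_image, Finset.coe_sort_coe, Finset.mem_coe,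
      bsParams, Finset.mem_filter, Finset.mem_product, Finset.mem_range]
    constructor
    · rintro ⟨hG, hI, hS⟩
      obtain ⟨a, k, hk, hle, heq⟩ := characterize hG hI hS
      exact ⟨(a, k), ⟨⟨by omega, by omega⟩, hk, hle⟩, heq.symm⟩
    · rintro ⟨⟨a, k⟩, ⟨⟨ha, hk⟩, hodd, hle⟩, rfl⟩
      refine ⟨blockSwap_grassmannian hle, blockSwap_sq, ?_⟩
      rw [blockSwap_sign hle, (Nat.odd_iff.mpr hodd).neg_one_pow]
  rw [hset, Set.ncard_image_of_injOn, Set.ncard_coe_finset, card_bsParams]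
  rintro ⟨a, k⟩ h1 ⟨a', k'⟩ h2 he
  simp only [Finset.coe_sort_coe, Finset.mem_coe, bsParams, Finset.mem_filter,
    Finset.mem_product, Finset.mem_range] at h1 h2
  obtain ⟨hq, hw⟩ := blockSwap_inj h1.2.2 h2.2.2 (by omega) (by omega) he
  simp [hq, hw]
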